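/- Let d be a metric on probability measures such that d^p is jointly convex for some p ∈ [1,∞), and suppose there is a modulus of continuity η(x,δ) satisfying d(αP+(1-α)Q, α'P+(1-α')Q) ≤ η(d(P,Q),|α-α'|) for all P,Q and α,α' ∈ [0,1], with sup_{0≤x≤M} η(x,δ) → 0 as δ→0 for every M < ∞. If α_n, α_n' ∈ [0,1] with |α_n-α_n'| → 0, d(P_n,P_n') → 0, d(Q_n,Q_n') → 0, and sup_n d(P_n',Q_n') < ∞, then d(α_n P_n + (1-α_n)Q_n, α_n' P_n' + (1-α_n')Q_n') → 0. -/

import Mathlib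

open MeasureTheory Filter Topology

/-!
Split the distance at the intermediate mixture `a P' + (1 - a) Q'` by the triangle inequality.
Changing the components at fixed weight moves the mixture by at most
`max (d P P') (d Q Q')`, since `d^p` is jointly convex and a convex combination of `p`-th powers
is at most the `p`-th power of the maximum. Changing the weight with fixed components is
controlled by `η (d P' Q') |a - a'|`, which tends to `0` because `d P' Q'` stays in a bounded
range, where `η` is uniformly small.
-/

/-- The mixture `a • P + (1-a) • Q` of two measures on `ℝ`, for `a ∈ [0,1]`. -/
noncomputable def mixM (a : ℝ) (P Q : MeasureTheory.Measure ℝ) : MeasureTheory.Measure ℝ :=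
  ENNReal.ofReal a • P + ENNReal.ofReal (1 - a) • Q

theorem le_max_of_rpow_le_convex_comb {p a x y z : ℝ} (hp : 0 < p) (ha : a ∈ Set.Icc (0:ℝ) 1)
    (hx : 0 ≤ x) (hy : 0 ≤ y) (hz : 0 ≤ z) (h : z ^ p ≤ a * x ^ p + (1 - a) * y ^ p) :
    z ≤ max x y := by
  have hxm : x ^ p ≤ max x y ^ p := Real.rpow_le_rpow hx (le_max_left x y) hp.le
  have hym : y ^ p ≤ max x y ^ p := Real.rpow_le_rpow hy (le_max_right x y) hp.le
  have hcomb : a * x ^ p + (1 - a) * y ^ p ≤ max x y ^ p := by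
    calc a * x ^ p + (1 - a) * y ^ p
        ≤ a * max x y ^ p + (1 - a) * max x y ^ p := by
          gcongr
          · exact ha.1
          · exact sub_nonneg.2 ha.2
      _ = max x y ^ p := by ring
  exact (Real.rpow_le_rpow_iff hz (hx.trans (le_max_left x y)) hp).1 (h.trans hcomb)

theorem tendsto_zero_of_le_uniform_modulus {ι : Type*} {l : Filter ι} {η : ℝ → ℝ → ℝ} {M : ℝ}
    (hη : ∀ ε > (0:ℝ), ∃ δ₀ > (0:ℝ), ∀ δ : ℝ, 0 ≤ δ → δ < δ₀ →
      ∀ x : ℝ, 0 ≤ x → x ≤ M → η x δ < ε)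
    {δ x b : ι → ℝ} (hδ_nonneg : ∀ i, 0 ≤ δ i) (hδ : Tendsto δ l (𝓝 0))
    (hx_nonneg : ∀ i, 0 ≤ x i) (hxM : ∀ i, x i ≤ M)
    (hb_nonneg : ∀ i, 0 ≤ b i) (hb : ∀ i, b i ≤ η (x i) (δ i)) :
    Tendsto b l (𝓝 0) := by
  refine tendsto_order.2 ⟨fun ε hε => Eventually.of_forall fun i => hε.trans_le (hb_nonneg i),
    fun ε hε => ?_⟩
  obtain ⟨δ₀, hδ₀, hsmall⟩ := hη ε hε
  filter_upwards [(tendsto_order.1 hδ).2 δ₀ hδ₀] with i hi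
  exact (hb i).trans_lt (hsmall _ (hδ_nonneg i) hi _ (hx_nonneg i) (hxM i))

theorem mixture_continuity_general
    (d : Measure ℝ → Measure ℝ → ℝ) (p : ℝ) (hp : 1 ≤ p)
    (hd_nonneg : ∀ P Q, 0 ≤ d P Q)
    (hd_triangle : ∀ P Q R, d P R ≤ d P Q + d Q R)
    (hconvex : ∀ a : ℝ, a ∈ Set.Icc (0:ℝ) 1 → ∀ P P' Q Q' : Measure ℝ,
      d (mixM a P Q) (mixM a P' Q') ^ p ≤ a * d P P' ^ p + (1 - a) * d Q Q' ^ p)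
    (η : ℝ → ℝ → ℝ)
    (hη : ∀ P Q : Measure ℝ, ∀ a a' : ℝ, a ∈ Set.Icc (0:ℝ) 1 → a' ∈ Set.Icc (0:ℝ) 1 →
      d (mixM a P Q) (mixM a' P Q) ≤ η (d P Q) |a - a'|)
    (hη_unif : ∀ M : ℝ, ∀ ε > (0:ℝ), ∃ δ₀ > (0:ℝ), ∀ δ : ℝ, 0 ≤ δ → δ < δ₀ →
      ∀ x : ℝ, 0 ≤ x → x ≤ M → η x δ < ε)
    (a a' : ℕ → ℝ) (P P' Q Q' : ℕ → Measure ℝ)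
    (ha : ∀ n, a n ∈ Set.Icc (0:ℝ) 1) (ha' : ∀ n, a' n ∈ Set.Icc (0:ℝ) 1)
    (hαconv : Tendsto (fun n => |a n - a' n|) atTop (𝓝 0))
    (hPconv : Tendsto (fun n => d (P n) (P' n)) atTop (𝓝 0))
    (hQconv : Tendsto (fun n => d (Q n) (Q' n)) atTop (𝓝 0))
    (hbdd : ∃ M : ℝ, ∀ n, d (P' n) (Q' n) ≤ M) :
    Tendsto (fun n => d (mixM (a n) (P n) (Q n)) (mixM (a' n) (P' n) (Q' n)))
      atTop (𝓝 0) := by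
  obtain ⟨M, hM⟩ := hbdd
  have hcomponents : ∀ n, d (mixM (a n) (P n) (Q n)) (mixM (a n) (P' n) (Q' n)) ≤
      max (d (P n) (P' n)) (d (Q n) (Q' n)) := fun n =>
    le_max_of_rpow_le_convex_comb (by linarith) (ha n) (hd_nonneg _ _) (hd_nonneg _ _)
      (hd_nonneg _ _) (hconvex _ (ha n) _ _ _ _)
  have hweights : Tendsto (fun n => d (mixM (a n) (P' n) (Q' n)) (mixM (a' n) (P' n) (Q' n)))
      atTop (𝓝 0) :=
    tendsto_zero_of_le_uniform_modulus (hη_unif M) (fun _ => abs_nonneg _) hαconv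
      (fun _ => hd_nonneg _ _) hM (fun _ => hd_nonneg _ _) (fun n => hη _ _ _ _ (ha n) (ha' n))
  have hmax : Tendsto (fun n => max (d (P n) (P' n)) (d (Q n) (Q' n))) atTop (𝓝 0) := by
    simpa using hPconv.max hQconv
  refine squeeze_zero (fun _ => hd_nonneg _ _) (fun n => ?_) (by simpa using hmax.add hweights)
  exact (hd_triangle _ (mixM (a n) (P' n) (Q' n)) _).trans (add_le_add (hcomponents n) le_rfl)

/-- if `d` is a metric on probability measures such that `d^p` is jointly
convex for some `p ∈ [1,∞)`, and there is a modulus of continuity `η` controlling the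
dependence of mixtures on the mixing coefficient, then mixtures are jointly continuous in
the weights and the components. -/
theorem mixture_continuity
    (d : Measure ℝ → Measure ℝ → ℝ) (p : ℝ) (hp : 1 ≤ p)
    (hd_nonneg : ∀ P Q, 0 ≤ d P Q)
    (hd_symm : ∀ P Q, d P Q = d Q P)
    (hd_triangle : ∀ P Q R, d P R ≤ d P Q + d Q R)
    (hconvex : ∀ a : ℝ, a ∈ Set.Icc (0:ℝ) 1 → ∀ P P' Q Q' : Measure ℝ,
      d (mixM a P Q) (mixM a P' Q') ^ p ≤ a * d P P' ^ p + (1 - a) * d Q Q' ^ p)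
    (η : ℝ → ℝ → ℝ)
    (hη : ∀ P Q : Measure ℝ, ∀ a a' : ℝ, a ∈ Set.Icc (0:ℝ) 1 → a' ∈ Set.Icc (0:ℝ) 1 →
      d (mixM a P Q) (mixM a' P Q) ≤ η (d P Q) |a - a'|)
    (hη_unif : ∀ M : ℝ, ∀ ε > (0:ℝ), ∃ δ₀ > (0:ℝ), ∀ δ : ℝ, 0 ≤ δ → δ < δ₀ →
      ∀ x : ℝ, 0 ≤ x → x ≤ M → η x δ < ε)
    (a a' : ℕ → ℝ) (P P' Q Q' : ℕ → Measure ℝ)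
    (ha : ∀ n, a n ∈ Set.Icc (0:ℝ) 1) (ha' : ∀ n, a' n ∈ Set.Icc (0:ℝ) 1)
    (hαconv : Tendsto (fun n => |a n - a' n|) atTop (𝓝 0))
    (hPconv : Tendsto (fun n => d (P n) (P' n)) atTop (𝓝 0))
    (hQconv : Tendsto (fun n => d (Q n) (Q' n)) atTop (𝓝 0))
    (hbdd : ∃ M : ℝ, ∀ n, d (P' n) (Q' n) ≤ M) :
    Tendsto (fun n => d (mixM (a n) (P n) (Q n)) (mixM (a' n) (P' n) (Q' n)))
      atTop (𝓝 0) :=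
  mixture_continuity_general d p hp hd_nonneg hd_triangle hconvex η hη hη_unif a a' P P' Q Q' ha ha'
    hαconv hPconv hQconv hbdd
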